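/- arXiv:solv-int/9811001 — 2 statements merged into one kernel-verified Lean document; each statement's English description precedes it below -/
import Mathlib

section
/- For every ℂ-linear derivation ξ : A → A, the ℂ-linear map δ_ξ on 𝔤_tor defined by δ_ξ(x ⊗ f) = x ⊗ ξ(f) on the loop part and by the induced Lie derivative L̄_ξ (determined by L̄_ξ((f·dg)‾) = ((ξf)·dg + f·d(ξg))‾) on the central part Ω¹_A/dA is a derivation of the Lie algebra 𝔤_tor: δ_ξ([a,b]) = [δ_ξ a, b] + [a, δ_ξ b] for all a, b ∈ 𝔤_tor. -/
open scoped TensorProduct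

/- A = ℂ[s^{±1}, t^{±1}], the group algebra of ℤ² over ℂ. -/
set_option maxHeartbeats 1000000
noncomputable section

abbrev A : Type := AddMonoidAlgebra ℂ (ℤ × ℤ)

abbrev Ω1 : Type := KaehlerDifferential ℂ A

/-- The ℂ-subspace dA ⊆ Ω¹_A of exact differentials. -/
def dA : Submodule ℂ Ω1 := LinearMap.range (KaehlerDifferential.D ℂ A).toLinearMap

abbrev Qt : Type := Ω1 ⧸ dA

def pr : Ω1 →ₗ[ℂ] Qt := dA.mkQ

/-- For every ℂ-derivation ξ of A, the map δ_ξ = (x⊗f ↦ x⊗ξf) ⊕ L̄_ξ is a derivation of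
the Lie algebra 𝔤_tor (whose bracket `br` is characterized on pure tensors by
[X⊗f, Y⊗g] = [X,Y]⊗(fg) + (X,Y)·((df)·g)‾, with Ω¹_A/dA central):
δ_ξ[a,b] = [δ_ξ a, b] + [a, δ_ξ b]. -/
theorem stmt8 (𝔤 : Type) [LieRing 𝔤] [LieAlgebra ℂ 𝔤]
    (B : 𝔤 →ₗ[ℂ] 𝔤 →ₗ[ℂ] ℂ)
    (hsymm : ∀ x y : 𝔤, B x y = B y x)
    (hinv : ∀ x y z : 𝔤, B ⁅x, y⁆ z = B x ⁅y, z⁆)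
    (br : ((𝔤 ⊗[ℂ] A) × Qt) →ₗ[ℂ] ((𝔤 ⊗[ℂ] A) × Qt) →ₗ[ℂ] ((𝔤 ⊗[ℂ] A) × Qt))
    (hbr : ∀ (X Y : 𝔤) (f g : A),
      br (X ⊗ₜ[ℂ] f, 0) (Y ⊗ₜ[ℂ] g, 0)
        = (⁅X, Y⁆ ⊗ₜ[ℂ] (f * g), B X Y • pr (g • KaehlerDifferential.D ℂ A f)))
    (hcentL : ∀ (c : Qt) (m : (𝔤 ⊗[ℂ] A) × Qt), br (0, c) m = 0)
    (hcentR : ∀ (m : (𝔤 ⊗[ℂ] A) × Qt) (c : Qt), br m (0, c) = 0)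
    (ξ : Derivation ℂ A A)
    (Lbar : Qt →ₗ[ℂ] Qt)
    (hLbar : ∀ f g : A,
      Lbar (pr (f • KaehlerDifferential.D ℂ A g))
        = pr (ξ f • KaehlerDifferential.D ℂ A g + f • KaehlerDifferential.D ℂ A (ξ g))) :
    ∀ a b : (𝔤 ⊗[ℂ] A) × Qt,
      (LinearMap.prodMap (LinearMap.lTensor 𝔤 ξ.toLinearMap) Lbar) (br a b)
        = br ((LinearMap.prodMap (LinearMap.lTensor 𝔤 ξ.toLinearMap) Lbar) a) b
          + br a ((LinearMap.prodMap (LinearMap.lTensor 𝔤 ξ.toLinearMap) Lbar) b) := by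

  classical
  set D' := LinearMap.lTensor 𝔤 ξ.toLinearMap with hD'
  set Dp := LinearMap.prodMap D' Lbar with hDp
  have hred : ∀ (u : 𝔤 ⊗[ℂ] A) (c : Qt) (v : 𝔤 ⊗[ℂ] A) (d : Qt),
      br (u, c) (v, d) = br (u, 0) (v, 0) := by
    intro u c v d
    have h1 : ((u, c) : (𝔤 ⊗[ℂ] A) × Qt) = (u, 0) + (0, c) := by simp
    have h2 : ((v, d) : (𝔤 ⊗[ℂ] A) × Qt) = (v, 0) + (0, d) := by simp
    rw [h1, h2]
    simp only [map_add, LinearMap.add_apply, hcentL, hcentR]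
    simp
  have key : ∀ u v : 𝔤 ⊗[ℂ] A,
      Dp (br (u, 0) (v, 0)) = br (D' u, 0) (v, 0) + br (u, 0) (D' v, 0) := by
    intro u v
    induction u using TensorProduct.induction_on with
    | zero =>
        simp only [map_zero, hcentL, LinearMap.zero_apply, zero_add, add_zero]
    | tmul X f =>
        induction v using TensorProduct.induction_on with
        | zero =>
            simp only [map_zero, hcentL, hcentR, LinearMap.zero_apply, zero_add, add_zero]
        | tmul Y g =>
            have hf : D' (X ⊗ₜ[ℂ] f) = X ⊗ₜ[ℂ] ξ f := by
              rw [hD']; exact LinearMap.lTensor_tmul _ _ _ _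
            have hg : D' (Y ⊗ₜ[ℂ] g) = Y ⊗ₜ[ℂ] ξ g := by
              rw [hD']; exact LinearMap.lTensor_tmul _ _ _ _
            rw [hbr, hf, hg, hbr, hbr, Prod.mk_add_mk]
            simp only [hDp, LinearMap.prodMap_apply, Prod.mk.injEq]
            constructor
            · have hq : ξ (f * g) = ξ f * g + f * ξ g := by
                rw [ξ.leibniz, smul_eq_mul, smul_eq_mul, mul_comm g (ξ f), add_comm]
              have hD : D' (⁅X, Y⁆ ⊗ₜ[ℂ] (f * g)) = ⁅X, Y⁆ ⊗ₜ[ℂ] ξ (f * g) := by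
                rw [hD']; exact LinearMap.lTensor_tmul _ _ _ _
              rw [hD, hq, TensorProduct.tmul_add]
            · rw [map_smul, hLbar, map_add, smul_add, add_comm]
        | add v1 v2 h1 h2 =>
            have e : ((v1 + v2 : 𝔤 ⊗[ℂ] A), (0 : Qt)) = (v1, 0) + (v2, 0) := by simp
            have e2 : ((D' v1 + D' v2 : 𝔤 ⊗[ℂ] A), (0 : Qt)) = (D' v1, 0) + (D' v2, 0) := by
              simp
            rw [e, map_add, map_add, map_add, map_add, e2, map_add, h1, h2]
            abel
    | add u1 u2 h1 h2 =>
        have e : ((u1 + u2 : 𝔤 ⊗[ℂ] A), (0 : Qt)) = (u1, 0) + (u2, 0) := by simp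
        have e2 : ((D' u1 + D' u2 : 𝔤 ⊗[ℂ] A), (0 : Qt)) = (D' u1, 0) + (D' u2, 0) := by simp
        rw [e, map_add, LinearMap.add_apply, map_add, map_add, e2, map_add,
          LinearMap.add_apply, LinearMap.add_apply, h1, h2]
        abel
  rintro ⟨u, c⟩ ⟨v, d⟩
  have hDa : Dp (u, c) = (D' u, Lbar c) := rfl
  have hDb : Dp (v, d) = (D' v, Lbar d) := rfl
  rw [hred u c v d, hDa, hDb, hred (D' u) (Lbar c) v d, hred u c (D' v) (Lbar d)]
  exact key u v

end
end

section
/- Let ∂ := ∂_{log t} be the ℂ-linear derivation of A with ∂(s^m t^p) = p·s^m t^p. On the ℂ-vector space W := (A·∂) ⊕ (Ω¹_A/dA) define a bracket by [f∂, g∂] := (f·∂g − g·∂f)·∂ − ((∂g)·d(∂f))‾, [f∂, ω̄] := L̄_{f∂}(ω̄) = −[ω̄, f∂] (the induced Lie derivative on Ω¹_A/dA), and [ω̄, η̄] := 0. Then this bracket is well-defined, alternating, and satisfies the Jacobi identity, so W is a Lie algebra over ℂ; in particular the cyclic identity Σ_cyc ((∂(f·∂g − g·∂f))·d(∂h))‾-type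 terms compensate exactly against the Lie-derivative terms Σ_cyc L̄_{h∂}(((∂g)·d(∂f))‾). -/
/- A = ℂ[s^{±1}, t^{±1}], the group algebra of ℤ² over ℂ. -/
noncomputable section

set_option maxHeartbeats 1000000
set_option synthInstance.maxHeartbeats 400000

local notation "𝒟" => KaehlerDifferential.D ℂ A

lemma pr_D (x : A) : pr (𝒟 x) = 0 := by
  have hx : (𝒟 x) ∈ dA := ⟨x, rfl⟩
  simpa [pr, Submodule.mkQ_apply] using (Submodule.Quotient.mk_eq_zero dA).2 hx

lemma pr_sym (x y : A) : pr (x • 𝒟 y) + pr (y • 𝒟 x) = 0 := by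
  have h := pr_D (x * y)
  rw [Derivation.leibniz, map_add] at h
  exact h

lemma pr_self (x : A) : pr (x • 𝒟 x) = 0 := by
  have h := pr_sym x x
  have h3 : pr (x • 𝒟 x) = (2:ℂ)⁻¹ • ((2:ℂ) • pr (x • 𝒟 x)) := by
    rw [smul_smul]; norm_num
  rw [h3, two_smul, h, smul_zero]

lemma Lval (dlt : Derivation ℂ A A) (L : Derivation ℂ A A → (Qt →ₗ[ℂ] Qt))
    (hL : ∀ (ξ : Derivation ℂ A A) (f g : A),
      L ξ (pr (f • 𝒟 g)) = pr (ξ f • 𝒟 g + f • 𝒟 (ξ g)))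
    (f u v : A) :
    L (f • dlt) (pr (u • 𝒟 v)) = pr ((f * dlt u) • 𝒟 v + u • 𝒟 (f * dlt v)) := by
  rw [hL, Derivation.smul_apply, Derivation.smul_apply, smul_eq_mul, smul_eq_mul]

lemma Qt_ext (T T' : Qt →ₗ[ℂ] Qt)
    (h : ∀ f g : A, T (pr (f • 𝒟 g)) = T' (pr (f • 𝒟 g))) : T = T' := by
  have key : ∀ x : Ω1, T (pr x) = T' (pr x) := by
    intro x
    have hx : x ∈ Submodule.span A (Set.range <| KaehlerDifferential.D ℂ A) := by
      rw [KaehlerDifferential.span_range_derivation]; trivial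
    have main : ∀ a : A, T (pr (a • x)) = T' (pr (a • x)) := by
      induction hx using Submodule.span_induction with
      | mem y hy =>
        obtain ⟨g, rfl⟩ := hy
        intro a; exact h a g
      | zero => intro a; rw [smul_zero, map_zero, map_zero, map_zero]
      | add y z _ _ hy hz =>
        intro a
        rw [smul_add, map_add, map_add, map_add, hy a, hz a]
      | smul b y _ hy => intro a; rw [smul_smul]; exact hy (a * b)
    have h1 := main 1
    rwa [one_smul] at h1
  refine LinearMap.ext fun q => ?_
  obtain ⟨x, rfl⟩ := Submodule.mkQ_surjective dA q
  exact key x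

section
variable (dlt : Derivation ℂ A A) (L : Derivation ℂ A A → (Qt →ₗ[ℂ] Qt))
variable (hL : ∀ (ξ : Derivation ℂ A A) (f g : A),
      L ξ (pr (f • 𝒟 g)) = pr (ξ f • 𝒟 g + f • 𝒟 (ξ g)))
include hL

lemma Ladd (x y : A) :
    L ((x + y) • dlt) = L (x • dlt) + L (y • dlt) := by
  refine Qt_ext _ _ fun u v => ?_
  rw [LinearMap.add_apply, Lval dlt L hL, Lval dlt L hL, Lval dlt L hL, ← map_add]
  congr 1
  simp only [map_add, add_mul, smul_add, add_smul]
  module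

lemma Lsmul (c : ℂ) (x : A) :
    L ((c • x) • dlt) = c • L (x • dlt) := by
  refine Qt_ext _ _ fun u v => ?_
  rw [LinearMap.smul_apply, Lval dlt L hL, Lval dlt L hL, ← pr.map_smul]
  congr 1
  rw [smul_mul_assoc, smul_mul_assoc, Derivation.map_smul, smul_comm u c, smul_assoc,
    ← smul_add]

lemma Lzero' : L (0 : Derivation ℂ A A) = 0 := by
  refine Qt_ext _ _ fun u v => ?_
  rw [hL]
  simp

lemma Ladd' (x y : A) :
    L (x • dlt + y • dlt) = L (x • dlt) + L (y • dlt) := by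
  rw [← add_smul]; exact Ladd dlt L hL x y

lemma Lzero : L ((0 : A) • dlt) = 0 := by
  refine Qt_ext _ _ fun u v => ?_
  rw [Lval dlt L hL]
  simp

lemma Lcomm (f g : A) :
    L ((f * dlt g - g * dlt f) • dlt)
      = L (f • dlt) ∘ₗ L (g • dlt) - L (g • dlt) ∘ₗ L (f • dlt) := by
  refine Qt_ext _ _ fun u v => ?_
  simp only [LinearMap.sub_apply, LinearMap.comp_apply, Lval dlt L hL, map_add,
    Lval dlt L hL]
  simp only [← map_add, ← map_sub]
  congr 1
  simp only [Derivation.leibniz, map_add, map_sub, smul_eq_mul, smul_add, smul_sub]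
  module

lemma cocycle (f g h : A) :
    pr (dlt h • 𝒟 (dlt (f * dlt g - g * dlt f)))
      = L (h • dlt) (pr (dlt g • 𝒟 (dlt f))) + L (f • dlt) (pr (dlt h • 𝒟 (dlt g)))
        + L (g • dlt) (pr (dlt f • 𝒟 (dlt h)))
        - pr (dlt f • 𝒟 (dlt (g * dlt h - h * dlt g)))
        - pr (dlt g • 𝒟 (dlt (h * dlt f - f * dlt h))) := by
  rw [Lval dlt L hL, Lval dlt L hL, Lval dlt L hL]
  set X := dlt h • 𝒟 (dlt (f * dlt g - g * dlt f)) with hX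
  set Y2 := dlt f • 𝒟 (dlt (g * dlt h - h * dlt g)) with hY2
  set Y3 := dlt g • 𝒟 (dlt (h * dlt f - f * dlt h)) with hY3
  set A1 := (h * dlt (dlt g)) • 𝒟 (dlt f) + dlt g • 𝒟 (h * dlt (dlt f)) with hA1
  set A2 := (f * dlt (dlt h)) • 𝒟 (dlt g) + dlt h • 𝒟 (f * dlt (dlt g)) with hA2
  set A3 := (g * dlt (dlt f)) • 𝒟 (dlt h) + dlt f • 𝒟 (g * dlt (dlt h)) with hA3
  have hEE : X + Y2 + Y3 - (A1 + A2 + A3)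
      = -(𝒟 (dlt f * (h * dlt (dlt g))) + 𝒟 (dlt g * (f * dlt (dlt h)))
          + 𝒟 (dlt h * (g * dlt (dlt f)))) := by
    rw [hX, hY2, hY3, hA1, hA2, hA3]
    simp only [Derivation.leibniz, map_add, map_sub, smul_eq_mul, smul_add, smul_sub]
    module
  have hmem : X + Y2 + Y3 - (A1 + A2 + A3) ∈ dA := by
    rw [hEE]
    exact neg_mem (add_mem (add_mem ⟨_, rfl⟩ ⟨_, rfl⟩) ⟨_, rfl⟩)
  have key : pr (X + Y2 + Y3 - (A1 + A2 + A3)) = 0 := by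
    have := (Submodule.Quotient.mk_eq_zero dA).2 hmem
    simpa [pr, Submodule.mkQ_apply] using this
  simp only [map_sub, map_add] at key
  rw [sub_eq_zero] at key
  rw [eq_sub_iff_add_eq, eq_sub_iff_add_eq, add_right_comm]
  abel_nf
  abel_nf at key
  exact key

def brD : (A × Qt) →ₗ[ℂ] (A × Qt) →ₗ[ℂ] (A × Qt) := LinearMap.mk₂ ℂ
  (fun a b => (a.1 * dlt b.1 - b.1 * dlt a.1,
      L (a.1 • dlt) b.2 - L (b.1 • dlt) a.2 - pr (dlt b.1 • 𝒟 (dlt a.1))))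
  (by
    intro m₁ m₂ n
    refine Prod.ext_iff.mpr ⟨?_, ?_⟩
    · simp only [Prod.fst_add, Prod.snd_add, map_add]
      ring
    · simp only [Prod.fst_add, Prod.snd_add, map_add, Ladd' dlt L hL,
        LinearMap.add_apply, smul_add, add_smul]
      abel)
  (by
    intro c m n
    refine Prod.ext_iff.mpr ⟨?_, ?_⟩
    · simp only [Prod.smul_fst, Prod.smul_snd, Derivation.map_smul, smul_mul_assoc,
        mul_smul_comm, smul_sub]
    · simp only [Prod.smul_fst, Prod.smul_snd, Lsmul dlt L hL, LinearMap.smul_apply,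
        map_smul, Derivation.map_smul, smul_comm c, smul_sub]
      rw [← pr.map_smul]
      congr 2
      exact smul_comm _ _ _)
  (by
    intro m n₁ n₂
    refine Prod.ext_iff.mpr ⟨?_, ?_⟩
    · simp only [Prod.fst_add, Prod.snd_add, map_add]
      ring
    · simp only [Prod.fst_add, Prod.snd_add, map_add, Ladd' dlt L hL,
        LinearMap.add_apply, smul_add, add_smul]
      abel)
  (by
    intro c m n
    refine Prod.ext_iff.mpr ⟨?_, ?_⟩
    · simp only [Prod.smul_fst, Prod.smul_snd, Derivation.map_smul, smul_mul_assoc,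
        mul_smul_comm, smul_sub]
    · simp only [Prod.smul_fst, Prod.smul_snd, Lsmul dlt L hL, LinearMap.smul_apply,
        map_smul, Derivation.map_smul, smul_comm c, smul_sub]
      rw [← pr.map_smul]
      congr 2
      exact smul_assoc _ _ _)

end


/-- Let ∂ = ∂_{log t} (the derivation with ∂(s^m t^p) = p·s^m t^p), and for each
ℂ-derivation ξ of A let L̄_ξ be the induced Lie derivative on Ω¹_A/dA (determined by
L̄_ξ((f·dg)‾) = ((ξf)·dg + f·d(ξg))‾).  Then the ℂ-vector space
W = (A·∂) ⊕ (Ω¹_A/dA) carries a Lie algebra structure: a ℂ-bilinear, alternating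
bracket satisfying the Jacobi identity with
[f∂, g∂] = (f·∂g − g·∂f)·∂ − ((∂g)·d(∂f))‾,
[f∂, ω̄] = L̄_{f∂}(ω̄) = −[ω̄, f∂], and [ω̄, η̄] = 0. -/
theorem stmt9 (dlt : Derivation ℂ A A)
    (hdlt : ∀ (v : ℤ × ℤ) (c : ℂ),
      dlt (AddMonoidAlgebra.single v c) = v.2 • AddMonoidAlgebra.single v c)
    (L : Derivation ℂ A A → (Qt →ₗ[ℂ] Qt))
    (hL : ∀ (ξ : Derivation ℂ A A) (f g : A),
      L ξ (pr (f • KaehlerDifferential.D ℂ A g))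
        = pr (ξ f • KaehlerDifferential.D ℂ A g + f • KaehlerDifferential.D ℂ A (ξ g))) :
    ∃ br : (A × Qt) →ₗ[ℂ] (A × Qt) →ₗ[ℂ] (A × Qt),
      (∀ w, br w w = 0) ∧
      (∀ a b c, br (br a b) c + br (br b c) a + br (br c a) b = 0) ∧
      (∀ f g : A,
        br (f, 0) (g, 0)
          = (f * dlt g - g * dlt f, - pr ((dlt g) • KaehlerDifferential.D ℂ A (dlt f)))) ∧
      (∀ (f : A) (ω : Qt), br (f, 0) (0, ω) = (0, L (f • dlt) ω)) ∧
      (∀ (f : A) (ω : Qt), br (0, ω) (f, 0) = - (0, L (f • dlt) ω)) ∧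
      (∀ ω η : Qt, br (0, ω) (0, η) = 0) := by
  refine ⟨brD dlt L hL, ?_, ?_, ?_, ?_, ?_, ?_⟩
  · rintro ⟨f, ω⟩
    simp only [brD, LinearMap.mk₂_apply, sub_self, zero_sub, pr_self, neg_zero,
      Prod.mk_zero_zero]
  · rintro ⟨f, ω⟩ ⟨g, η⟩ ⟨h, θ⟩
    simp only [brD, LinearMap.mk₂_apply]
    rw [Prod.mk_add_mk, Prod.mk_add_mk, show (0 : A × Qt) = ((0 : A), (0 : Qt)) from rfl,
      Prod.mk.injEq]
    constructor
    · simp only [map_sub, Derivation.leibniz, smul_eq_mul]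
      ring
    · rw [Lcomm dlt L hL f g, Lcomm dlt L hL g h, Lcomm dlt L hL h f,
        cocycle dlt L hL f g h]
      simp only [LinearMap.sub_apply, LinearMap.comp_apply, map_sub]
      abel
  · intro f g
    simp only [brD, LinearMap.mk₂_apply, map_zero, sub_self, zero_sub]
  · intro f ω
    simp only [brD, LinearMap.mk₂_apply, map_zero, mul_zero, zero_mul, sub_self,
      sub_zero, zero_smul, zero_sub, neg_zero]
  · intro f ω
    simp only [brD, LinearMap.mk₂_apply, map_zero, mul_zero, zero_mul, sub_self,
      sub_zero, zero_sub, smul_zero, Prod.neg_mk, neg_zero]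
  · intro ω η
    simp only [brD, LinearMap.mk₂_apply, Lzero' L hL, LinearMap.zero_apply,
      map_zero, mul_zero, zero_mul, sub_self, sub_zero, zero_sub, zero_smul,
      neg_zero, Prod.mk_zero_zero]


end
end
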